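/- Let P_n be the polycyclic monoid of rank n ≥ 1 and let H be a group generated as a monoid by a finite set Y. If the word problem of H with respect to Y is accepted by a deterministic P_n-automaton over Y, then H is finite. In other words, no deterministic polycyclic monoid automaton accepts the word problem of an infinite finitely generated group. -/

import Mathlib

/-- A monoid `M` has *unique left inverses* if whenever `b * a = 1 = c * a` we have `b = c`. -/
def UniqueLeftInverses (M : Type) [Monoid M] : Prop :=
  ∀ a b c : M, b * a = 1 → c * a = 1 → b = c

/-- The word problem of a group `H`, generated as a monoid by the image of `φ : X → H`,
is the set of words over `X` representing the identity of `H`. -/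
def wordProblem {H : Type} [Group H] {X : Type} (φ : X → H) : Set (List X) :=
  {w | (w.map φ).prod = 1}

/-- A deterministic `M`-automaton over the alphabet `X`: a finite directed graph with
a distinguished initial state, a set of terminal states, and edges labelled by pairs in
`M × X`, such that each state has at most one outgoing edge per letter of `X`. -/
structure DetMAutomaton (M : Type) [Monoid M] (X : Type) where
  State : Type
  [stateFintype : Fintype State]
  init : State
  terminal : Set State
  edge : State → M × X → State → Prop
  det : ∀ ⦃p : State⦄ ⦃x : X⦄ ⦃g h : M⦄ ⦃q r : State⦄,
      edge p (g, x) q → edge p (h, x) r → g = h ∧ q = r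

namespace DetMAutomaton

variable {M : Type} [Monoid M] {X : Type}

/-- `A.Path p m w q` means there is a path from `p` to `q` labelled `(m, w)`: the
`X`-components of its edge labels spell out `w` in order, and the `M`-components
multiply in order to `m`. -/
inductive Path (A : DetMAutomaton M X) : A.State → M → List X → A.State → Prop
  | nil (p : A.State) : Path A p 1 [] p
  | cons {p q r : A.State} {g h : M} {x : X} {w : List X} :
      A.edge p (g, x) q → Path A q h w r → Path A p (g * h) (x :: w) r

/-- The language accepted by a deterministic `M`-automaton: all words `w` such that some
path labelled `(1, w)` leads from the initial state to a terminal state. -/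
def Lang (A : DetMAutomaton M X) : Set (List X) :=
  {w | ∃ q ∈ A.terminal, A.Path A.init 1 w q}

/-- A deterministic `M`-automaton is *deterministic terminal state minimal* (DTSM) if no
deterministic `M`-automaton accepting the same language has strictly fewer terminal states. -/
def DTSM (A : DetMAutomaton M X) : Prop :=
  ∀ B : DetMAutomaton M X, B.Lang = A.Lang → Nat.card A.terminal ≤ Nat.card B.terminal

end DetMAutomaton

/-- Partial maps from `α` to `α`, modelled as functions `α → Option α`. -/
def PartMap (α : Type) := α → Option α

/-- The monoid of partial maps on `α`, multiplication being composition in diagrammatic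
order (so that `f * g` means "apply `f` first, then `g`", matching the convention that
partial maps act on the right of their arguments). -/
instance PartMap.instMonoid {α : Type} : Monoid (PartMap α) where
  one := fun a => some a
  mul f g := fun a => (f a).bind g
  one_mul f := rfl
  mul_one f := funext fun a => by
    show (f a).bind some = f a
    cases f a <;> rfl
  mul_assoc f g h := funext fun a => by
    show ((f a).bind g).bind h = (f a).bind fun b => (g b).bind h
    cases f a <;> rfl

/-- The partial map `X* → X*x`, `w ↦ wx` (a "push"). -/
def pushMap {n : ℕ} (x : Fin n) : PartMap (List (Fin n)) :=
  fun w => some (w ++ [x])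

/-- The partial map `X*x → X*`, `wx ↦ w` (a "pop"); the relational inverse of `pushMap x`. -/
def popMap {n : ℕ} (x : Fin n) : PartMap (List (Fin n)) :=
  fun w => match w.getLast? with
    | some y => if y = x then some w.dropLast else none
    | none => none

/-- The polycyclic monoid of rank `n`: the submonoid of the monoid of partial maps on
`X*` (where `X` is an alphabet of size `n`) generated by the maps `pushMap x` and their
relational inverses `popMap x`, for `x ∈ X`. -/
def polycyclic (n : ℕ) : Submonoid (PartMap (List (Fin n))) :=
  Submonoid.closure (Set.range pushMap ∪ Set.range popMap)

/-!
Every element of the polycyclic monoid is either the empty map or a map `z ++ u ↦ z ++ v`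
replacing the suffix `u` by `v`. So if `m * t = 1` then `m` appends a word `v` and `t` strips it
off, and if moreover `m' * t` has a right inverse, `m'` appends a word ending in `v`.

In an automaton accepting the word problem of `H`, every run from the initial state extends to an
accepting run, so its register `m` has a right inverse `t`. Given two runs ending in the same
state, the completion of each can be grafted onto the other; by the above their registers append
words that are suffixes of each other, hence are equal. A common state and register make the
two words equal in `H`, because one completion accepts both. Thus `H` injects into the finite set
of states.
-/

namespace PartMap

variable {α : Type}

lemma mul_apply_eq_some {f g : PartMap α} {a c : α} :
    (f * g) a = some c ↔ ∃ b, f a = some b ∧ g b = some c :=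
  Option.bind_eq_some_iff

lemma ext_of_eq_some_iff {f g : PartMap α} (h : ∀ a b, f a = some b ↔ g a = some b) : f = g :=
  funext fun a => Option.ext (h a)

def empty : PartMap α := fun _ => none

variable [DecidableEq α]

def replaceSuffix (u v : List α) : PartMap (List α) :=
  fun w => (w.dropSuffix? u).map (· ++ v)

lemma replaceSuffix_eq_some {u v w y : List α} :
    replaceSuffix u v w = some y ↔ ∃ z, w = z ++ u ∧ y = z ++ v := by
  simp only [replaceSuffix, Option.map_eq_some_iff, List.dropSuffix?_eq_some_iff, beq_iff_eq]
  constructor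
  · rintro ⟨z, ⟨_, rfl, rfl⟩, rfl⟩
    exact ⟨z, rfl, rfl⟩
  · rintro ⟨z, rfl, rfl⟩
    exact ⟨z, ⟨u, rfl, rfl⟩, rfl⟩

lemma replaceSuffix_nil_apply (v w : List α) : replaceSuffix [] v w = some (w ++ v) :=
  replaceSuffix_eq_some.mpr ⟨w, (List.append_nil w).symm, rfl⟩

lemma replaceSuffix_nil_injective : Function.Injective (replaceSuffix (α := α) []) := by
  intro v v' h
  simpa [replaceSuffix_nil_apply] using congrFun h []

lemma replaceSuffix_mul_of_eq_append {u v u' v' c : List α} (h : v = c ++ u') :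
    replaceSuffix u v * replaceSuffix u' v' = replaceSuffix u (c ++ v') := by
  subst h
  refine ext_of_eq_some_iff fun w y => ?_
  simp only [mul_apply_eq_some, replaceSuffix_eq_some]
  constructor
  · rintro ⟨_, ⟨z, rfl, rfl⟩, z', h, rfl⟩
    obtain rfl : z ++ c = z' := List.append_cancel_right (by rw [List.append_assoc, h])
    exact ⟨z, rfl, by simp⟩
  · rintro ⟨z, rfl, rfl⟩
    exact ⟨_, ⟨z, rfl, rfl⟩, z ++ c, by simp, by simp⟩

lemma replaceSuffix_mul_of_append_eq {u v u' v' c : List α} (h : u' = c ++ v) :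
    replaceSuffix u v * replaceSuffix u' v' = replaceSuffix (c ++ u) v' := by
  subst h
  refine ext_of_eq_some_iff fun w y => ?_
  simp only [mul_apply_eq_some, replaceSuffix_eq_some]
  constructor
  · rintro ⟨_, ⟨z, rfl, rfl⟩, z', h, rfl⟩
    obtain rfl : z = z' ++ c := List.append_cancel_right (by rw [h, List.append_assoc])
    exact ⟨z', by simp, rfl⟩
  · rintro ⟨z, rfl, rfl⟩
    exact ⟨_, ⟨z ++ c, by simp, rfl⟩, z, by simp, rfl⟩

lemma replaceSuffix_mul_of_not_suffix {u v u' v' : List α} (h₁ : ¬u' <:+ v) (h₂ : ¬v <:+ u') :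
    replaceSuffix u v * replaceSuffix u' v' = empty := by
  refine ext_of_eq_some_iff fun w y => ⟨fun h => ?_, nofun⟩
  obtain ⟨_, hv, hu'⟩ := mul_apply_eq_some.mp h
  obtain ⟨z, -, rfl⟩ := replaceSuffix_eq_some.mp hv
  obtain ⟨z', hz', -⟩ := replaceSuffix_eq_some.mp hu'
  rcases List.suffix_or_suffix_of_suffix ⟨z', hz'.symm⟩ (List.suffix_append z v) with h | h
  exacts [absurd h h₁, absurd h h₂]

variable (α) in
def suffixReplacements : Submonoid (PartMap (List α)) where
  carrier := {m | m = empty ∨ ∃ u v, m = replaceSuffix u v}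
  one_mem' := Or.inr ⟨[], [], funext fun w => by rw [replaceSuffix_nil_apply, List.append_nil]; rfl⟩
  mul_mem' := by
    rintro _ b (rfl | ⟨u, v, rfl⟩) hb
    · exact Or.inl rfl
    rcases hb with rfl | ⟨u', v', rfl⟩
    · exact Or.inl (funext fun w => Option.bind_fun_none _)
    by_cases h₁ : u' <:+ v
    · obtain ⟨c, hc⟩ := h₁
      exact Or.inr ⟨u, c ++ v', replaceSuffix_mul_of_eq_append hc.symm⟩
    by_cases h₂ : v <:+ u'
    · obtain ⟨c, hc⟩ := h₂
      exact Or.inr ⟨c ++ u, v', replaceSuffix_mul_of_append_eq hc.symm⟩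
    exact Or.inl (replaceSuffix_mul_of_not_suffix h₁ h₂)

lemma exists_eq_replaceSuffix_nil_of_mul_eq_one {m t : PartMap (List α)}
    (hm : m ∈ suffixReplacements α) (ht : t ∈ suffixReplacements α) (h : m * t = 1) :
    ∃ v, m = replaceSuffix [] v ∧ t = replaceSuffix v [] := by
  have hmt : ∀ w, ∃ x, m w = some x ∧ t x = some w := fun w =>
    mul_apply_eq_some.mp (by rw [h]; rfl)
  obtain ⟨v, hv, htv⟩ := hmt []
  rcases hm with rfl | ⟨u, v₀, rfl⟩
  · cases hv
  obtain ⟨z, hz, rfl⟩ := replaceSuffix_eq_some.mp hv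
  obtain ⟨rfl, rfl⟩ := List.append_eq_nil_iff.mp hz.symm
  rcases ht with rfl | ⟨u', v', rfl⟩
  · cases htv
  obtain ⟨z', hz', hnil⟩ := replaceSuffix_eq_some.mp htv
  obtain ⟨rfl, rfl⟩ := List.append_eq_nil_iff.mp hnil.symm
  rw [List.nil_append, List.nil_append] at hz'
  exact ⟨v₀, rfl, by rw [hz']⟩

lemma suffix_of_mul_eq_one_of_mul_mul_eq_one {m m' t s : PartMap (List α)}
    (hm : m ∈ suffixReplacements α) (hm' : m' ∈ suffixReplacements α)
    (ht : t ∈ suffixReplacements α) (hs : s ∈ suffixReplacements α)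
    (h : m * t = 1) (h' : m' * t * s = 1) :
    ∃ v v', m = replaceSuffix [] v ∧ m' = replaceSuffix [] v' ∧ v <:+ v' := by
  obtain ⟨v, rfl, rfl⟩ := exists_eq_replaceSuffix_nil_of_mul_eq_one hm ht h
  obtain ⟨v', rfl, -⟩ := exists_eq_replaceSuffix_nil_of_mul_eq_one hm'
    (mul_mem ht hs) (by rw [← mul_assoc, h'])
  obtain ⟨_, hv', -⟩ := mul_apply_eq_some.mp (show (replaceSuffix [] v' * replaceSuffix v [] * s)
    [] = some [] by rw [h']; rfl)
  obtain ⟨_, hv, htv⟩ := mul_apply_eq_some.mp hv'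
  rw [replaceSuffix_nil_apply, List.nil_append, Option.some_inj] at hv
  obtain ⟨z, hz, -⟩ := replaceSuffix_eq_some.mp (hv ▸ htv)
  exact ⟨v, v', rfl, rfl, z, hz.symm⟩

end PartMap

open PartMap in
lemma polycyclic_le_suffixReplacements (n : ℕ) : polycyclic n ≤ suffixReplacements (Fin n) := by
  refine Submonoid.closure_le.mpr ?_
  rintro _ (⟨x, rfl⟩ | ⟨x, rfl⟩)
  · exact Or.inr ⟨[], [x], funext fun w => (replaceSuffix_nil_apply [x] w).symm⟩
  · refine Or.inr ⟨[x], [], ext_of_eq_some_iff fun w y => ?_⟩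
    rw [replaceSuffix_eq_some]
    cases w using List.reverseRecOn with
    | nil => simp [popMap]
    | append_singleton w a =>
      by_cases hax : a = x
      · simp [popMap, hax, eq_comm]
      · simp [popMap, hax]

lemma polycyclic_eq_of_mul_eq_one {n : ℕ} {m m' t t' s s' : polycyclic n} (ht : m * t = 1)
    (ht' : m' * t' = 1) (hs : m' * t * s = 1) (hs' : m * t' * s' = 1) : m = m' := by
  have hle := polycyclic_le_suffixReplacements n
  obtain ⟨v₁, v₁', h₁, h₁', hv₁⟩ := PartMap.suffix_of_mul_eq_one_of_mul_mul_eq_one (hle m.2)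
    (hle m'.2) (hle t.2) (hle s.2) (congrArg Subtype.val ht) (congrArg Subtype.val hs)
  obtain ⟨v₂', v₂, h₂', h₂, hv₂⟩ := PartMap.suffix_of_mul_eq_one_of_mul_mul_eq_one (hle m'.2)
    (hle m.2) (hle t'.2) (hle s'.2) (congrArg Subtype.val ht') (congrArg Subtype.val hs')
  obtain rfl := PartMap.replaceSuffix_nil_injective (h₁.symm.trans h₂)
  obtain rfl := PartMap.replaceSuffix_nil_injective (h₁'.symm.trans h₂')
  exact Subtype.ext (by rw [h₁, h₁', hv₁.eq_of_length_le hv₂.length_le])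

namespace DetMAutomaton

variable {M : Type} [Monoid M] {X : Type} {A : DetMAutomaton M X}

lemma Path.unique {p q q' : A.State} {m m' : M} {w : List X} (h : A.Path p m w q)
    (h' : A.Path p m' w q') : m = m' ∧ q = q' := by
  induction h generalizing m' q' with
  | nil => cases h'; exact ⟨rfl, rfl⟩
  | cons e _ ih =>
    cases h' with
    | cons e' h' =>
      obtain ⟨rfl, rfl⟩ := A.det e e'
      obtain ⟨rfl, rfl⟩ := ih h'
      exact ⟨rfl, rfl⟩

lemma Path.append {p q r : A.State} {m m' : M} {w w' : List X} (h : A.Path p m w q)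
    (h' : A.Path q m' w' r) : A.Path p (m * m') (w ++ w') r := by
  induction h with
  | nil => rwa [one_mul]
  | cons e _ ih => rw [mul_assoc]; exact Path.cons e (ih h')

lemma Path.exists_of_append {p r : A.State} {m : M} {w w' : List X}
    (h : A.Path p m (w ++ w') r) :
    ∃ q m₁ m₂, m = m₁ * m₂ ∧ A.Path p m₁ w q ∧ A.Path q m₂ w' r := by
  induction w generalizing p m with
  | nil => exact ⟨p, 1, m, (one_mul m).symm, Path.nil p, h⟩
  | cons x w ih =>
    cases h with
    | cons e h =>
      obtain ⟨q, m₁, m₂, rfl, h₁, h₂⟩ := ih h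
      exact ⟨q, _, m₂, (mul_assoc _ _ _).symm, Path.cons e h₁, h₂⟩

variable {H : Type} [Group H] {φ : X → H}

lemma exists_append_mem_lang (hgen : ∀ h : H, ∃ w : List X, (w.map φ).prod = h)
    (hacc : A.Lang = wordProblem φ) (w : List X) :
    ∃ u, (u.map φ).prod = (w.map φ).prod⁻¹ ∧ w ++ u ∈ A.Lang := by
  obtain ⟨u, hu⟩ := hgen (w.map φ).prod⁻¹
  refine ⟨u, hu, ?_⟩
  rw [hacc]
  simp [wordProblem, hu]

lemma exists_path_init (hgen : ∀ h : H, ∃ w : List X, (w.map φ).prod = h)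
    (hacc : A.Lang = wordProblem φ) (w : List X) : ∃ m q, A.Path A.init m w q := by
  obtain ⟨_, -, _, -, h⟩ := exists_append_mem_lang hgen hacc w
  obtain ⟨q, m, -, -, h, -⟩ := h.exists_of_append
  exact ⟨m, q, h⟩

lemma exists_path_terminal (hgen : ∀ h : H, ∃ w : List X, (w.map φ).prod = h)
    (hacc : A.Lang = wordProblem φ) {m : M} {w : List X} {q : A.State}
    (h : A.Path A.init m w q) :
    ∃ u t r, (u.map φ).prod = (w.map φ).prod⁻¹ ∧ r ∈ A.terminal ∧ m * t = 1 ∧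
      A.Path q t u r := by
  obtain ⟨u, hu, r, hr, hwu⟩ := exists_append_mem_lang hgen hacc w
  obtain ⟨q', m', t, hm't, h', hq'⟩ := hwu.exists_of_append
  obtain ⟨rfl, rfl⟩ := h'.unique h
  exact ⟨u, t, r, hu, hr, hm't.symm, hq'⟩

lemma prod_eq_of_path_of_path (hgen : ∀ h : H, ∃ w : List X, (w.map φ).prod = h)
    (hacc : A.Lang = wordProblem φ) {m : M} {w w' : List X} {q : A.State}
    (h : A.Path A.init m w q) (h' : A.Path A.init m w' q) :
    (w.map φ).prod = (w'.map φ).prod := by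
  obtain ⟨u, t, r, hu, hr, hmt, hq⟩ := exists_path_terminal hgen hacc h
  have hw'u : ((w' ++ u).map φ).prod = 1 :=
    (hacc ▸ ⟨r, hr, hmt ▸ h'.append hq⟩ : w' ++ u ∈ wordProblem φ)
  rw [List.map_append, List.prod_append, hu] at hw'u
  exact (mul_inv_eq_one.mp hw'u).symm

lemma register_eq_of_path_of_path
    (hM : ∀ m m' t t' s s' : M, m * t = 1 → m' * t' = 1 → m' * t * s = 1 → m * t' * s' = 1 →
      m = m')
    (hgen : ∀ h : H, ∃ w : List X, (w.map φ).prod = h) (hacc : A.Lang = wordProblem φ)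
    {m m' : M} {w w' : List X} {q : A.State} (h : A.Path A.init m w q)
    (h' : A.Path A.init m' w' q) : m = m' := by
  obtain ⟨_, t, _, -, -, hmt, hq⟩ := exists_path_terminal hgen hacc h
  obtain ⟨_, t', _, -, -, hm't', hq'⟩ := exists_path_terminal hgen hacc h'
  obtain ⟨-, s, -, -, -, hs, -⟩ := exists_path_terminal hgen hacc (h'.append hq)
  obtain ⟨-, s', -, -, -, hs', -⟩ := exists_path_terminal hgen hacc (h.append hq')
  exact hM m m' t t' s s' hmt hm't' hs hs'

theorem finite_of_lang_eq_wordProblem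
    (hM : ∀ m m' t t' s s' : M, m * t = 1 → m' * t' = 1 → m' * t * s = 1 → m * t' * s' = 1 →
      m = m')
    (hgen : ∀ h : H, ∃ w : List X, (w.map φ).prod = h) (hacc : A.Lang = wordProblem φ) :
    Finite H := by
  have := A.stateFintype
  choose word hword using fun h => hgen h
  choose register state hpath using fun h => exists_path_init hgen hacc (word h)
  refine Finite.of_injective state fun h h' hstate => ?_
  have hreg := register_eq_of_path_of_path hM hgen hacc (hpath h) (hstate ▸ hpath h')
  rw [← hword h, ← hword h']
  exact prod_eq_of_path_of_path hgen hacc (hpath h) (hstate ▸ hreg ▸ hpath h')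

end DetMAutomaton

theorem finite_of_wordProblem_det_polycyclic_automaton_general {n : ℕ}
    {H : Type} [Group H] {Y : Type} (φ : Y → H)
    (hgen : ∀ h : H, ∃ w : List Y, (w.map φ).prod = h)
    (A : DetMAutomaton ↥(polycyclic n) Y) (hacc : A.Lang = wordProblem φ) :
    Finite H :=
  A.finite_of_lang_eq_wordProblem (fun _ _ _ _ _ _ => polycyclic_eq_of_mul_eq_one) hgen hacc

/-- No deterministic polycyclic monoid automaton accepts the word problem of an infinite
finitely generated group: if the word problem of `H` (generated as a monoid by the finite
set `Y`) is accepted by a deterministic `P_n`-automaton, then `H` is finite. -/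
theorem finite_of_wordProblem_det_polycyclic_automaton {n : ℕ} (hn : 1 ≤ n)
    {H : Type} [Group H] {Y : Type} [Fintype Y] (φ : Y → H)
    (hgen : ∀ h : H, ∃ w : List Y, (w.map φ).prod = h)
    (A : DetMAutomaton ↥(polycyclic n) Y) (hacc : A.Lang = wordProblem φ) :
    Finite H :=
  finite_of_wordProblem_det_polycyclic_automaton_general φ hgen A hacc
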